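/- arXiv:1512.08193 — 2 statements merged into one kernel-verified Lean document; each statement's English description precedes it below -/
import Mathlib

section
/- If X is a standard Gaussian random variable and ε = log(X²), then the characteristic function of ε is E[exp(iεy)] = (1/√π) · 2^{iy} · Γ(1/2 + iy), where Γ is the complex Gamma function. -/
/-!
Off the null set `{0}`, `exp (i y log x²) = (x²) ^ (i y)`, so the claim is the value at `s = i y`
of the Mellin transform `E[(X²) ^ s] = 2 ^ s Γ(s + 1/2) / √π` of the chi-squared law. By
evenness of the Gaussian density this is twice a half-line integral, which the substitution
`x = √t` turns into Euler's integral `∫₀^∞ t ^ (s - 1/2) e^{-t/2} dt = 2 ^ (s + 1/2) Γ(s + 1/2)`.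
-/

open MeasureTheory ProbabilityTheory Set

theorem integral_eq_two_smul_integral_Ioi_of_even {E : Type*} [NormedAddCommGroup E]
    [NormedSpace ℝ E] {f : ℝ → E} (hf : ∀ x, f (-x) = f x) :
    ∫ x, f x = (2 : ℝ) • ∫ x in Ioi 0, f x := by
  have hIic : ∫ x in Iic 0, f x = ∫ x in Ioi 0, f x := by
    simpa [hf] using (integral_comp_neg_Ioi 0 f).symm
  by_cases hIoi : IntegrableOn f (Ioi 0)
  · have hIci : IntegrableOn f (Ici (-0)) := by
      rw [neg_zero]
      exact (integrableOn_Ici_iff_integrableOn_Ioi (μ := volume) enorm_ne_top).mpr hIoi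
    have hIic_int : IntegrableOn f (Iic 0) := by
      simpa only [hf] using hIci.comp_neg_Iic
    have hint : Integrable f := by
      simpa using hIic_int.union hIoi
    rw [← integral_add_compl measurableSet_Ioi hint, compl_Ioi, hIic, two_smul]
  · rw [integral_undef fun h ↦ hIoi h.integrableOn, integral_undef hIoi, smul_zero]

theorem integral_Ioi_sq_cpow_mul_exp_neg_sq_div_two {s : ℂ} (hs : -1 / 2 < s.re) :
    ∫ x in Ioi (0 : ℝ), ((x ^ 2 : ℝ) : ℂ) ^ s * Real.exp (-x ^ 2 / 2) =
      2⁻¹ * 2 ^ (s + 1 / 2) * Complex.Gamma (s + 1 / 2) := by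
  have hre : 0 < (s + 1 / 2).re := by simp; linarith
  have hGamma := Complex.integral_cpow_mul_exp_neg_mul_Ioi hre one_half_pos
  rw [show 1 / (((1 / 2 : ℝ)) : ℂ) = 2 by norm_num] at hGamma
  rw [← integral_comp_rpow_Ioi _ (one_div_ne_zero two_ne_zero), mul_assoc, ← hGamma,
    ← integral_const_mul]
  refine setIntegral_congr_fun measurableSet_Ioi fun t (ht : 0 < t) ↦ ?_
  have ht' : (t : ℂ) ≠ 0 := by exact_mod_cast ht.ne'
  rw [← Real.sqrt_eq_rpow, Real.sq_sqrt ht.le, Complex.real_smul, Complex.ofReal_mul,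
    Complex.ofReal_cpow ht.le, show s + 1 / 2 - 1 = s + ((1 / 2 - 1 : ℝ) : ℂ) by push_cast; ring,
    Complex.cpow_add _ _ ht', abs_of_pos one_half_pos]
  push_cast
  ring_nf

theorem two_cpow_add_half (s : ℂ) : (2 : ℂ) ^ (s + 1 / 2) = 2 ^ s * (√2 : ℝ) := by
  rw [Complex.cpow_add _ _ two_ne_zero, Real.sqrt_eq_rpow, Complex.ofReal_cpow zero_le_two]
  norm_num

theorem integral_sq_cpow_gaussianReal {s : ℂ} (hs : -1 / 2 < s.re) :
    ∫ x, ((x ^ 2 : ℝ) : ℂ) ^ s ∂gaussianReal 0 1 =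
      (√Real.pi : ℂ)⁻¹ * 2 ^ s * Complex.Gamma (s + 1 / 2) := by
  set f : ℝ → ℂ := fun x ↦ ((x ^ 2 : ℝ) : ℂ) ^ s * Real.exp (-x ^ 2 / 2)
  have hdensity : ∀ x : ℝ, gaussianPDFReal 0 1 x • ((x ^ 2 : ℝ) : ℂ) ^ s =
      (√(2 * Real.pi) : ℂ)⁻¹ * f x := by
    intro x
    simp only [f, gaussianPDFReal, NNReal.coe_one, mul_one, sub_zero, Complex.real_smul]
    push_cast
    ring
  have hf : ∀ x, f (-x) = f x := by simp [f]
  simp_rw [integral_gaussianReal_eq_integral_smul one_ne_zero, hdensity, integral_const_mul,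
    integral_eq_two_smul_integral_Ioi_of_even hf, f,
    integral_Ioi_sq_cpow_mul_exp_neg_sq_div_two hs, two_cpow_add_half,
    Real.sqrt_mul zero_le_two, Complex.real_smul]
  have h2 : (√2 : ℂ) ≠ 0 := by simp
  push_cast
  field_simp

/-- If `X` is standard Gaussian and `ε = log(X²)`, then
`E[exp(iεy)] = (1/√π) · 2^{iy} · Γ(1/2 + iy)`. -/
theorem charFun_log_chi_squared (y : ℝ) :
    ∫ x : ℝ, Complex.exp (Complex.I * y * Real.log (x ^ 2)) ∂(gaussianReal 0 1) =
      (Real.sqrt Real.pi : ℂ)⁻¹ * (2 : ℂ) ^ (Complex.I * y) *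
        Complex.Gamma (1 / 2 + Complex.I * y) := by
  -- At `x = 0` the two sides differ (`Real.log 0 = 0` but `0 ^ (i y) = 0` for `y ≠ 0`).
  have hcpow : ∀ᵐ x ∂gaussianReal 0 1,
      Complex.exp (Complex.I * y * Real.log (x ^ 2)) = ((x ^ 2 : ℝ) : ℂ) ^ (Complex.I * y) := by
    filter_upwards [(gaussianReal_absolutelyContinuous 0 one_ne_zero).ae_le
      (Measure.ae_ne volume 0)] with x hx
    rw [Complex.cpow_def_of_ne_zero (by simpa using hx), ← Complex.ofReal_log (sq_nonneg x),
      mul_comm]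
  rw [integral_congr_ae hcpow, integral_sq_cpow_gaussianReal (by norm_num), add_comm]
end

section
/- Let Θ ⊂ ℝ^p be compact and h : Θ × ℝ → ℝ be such that θ ↦ h(θ,y) is continuous for each y and y ↦ h(θ,y) is measurable for each θ, with a dominating function s satisfying |h(θ,y)| ≤ s(y) for all θ and E[s(Y₁)] < ∞. If (Y_i) is a stationary ergodic process, then sup_{θ∈Θ} |(1/n)∑_{i=1}^n h(θ,Y_i) − E[h(θ,Y₁)]| → 0 in probability as n → ∞, and θ ↦ E[h(θ,Y₁)] is continuous. -/
/-!
Von Neumann's mean ergodic theorem applied to the Koopman operator `f ↦ f ∘ T` on `L²` gives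
`L²`-convergence of Birkhoff averages to the orthogonal projection onto the invariant functions,
which by ergodicity are the constants; so the limit is the mean. Since the averages are `L¹`
contractions, the convergence extends from simple functions to all of `L¹`.

For the uniform statement, continuity in `θ` and domination give around each `θ₀ ∈ Θ` an
integrable bracket `w ≥ |h(θ, ·) - h(θ₀, ·)|` near `θ₀` with `E w` small (dominated convergence
for the local oscillation). Finitely many brackets cover the compact `Θ`, and the `L¹` ergodic
theorem for the finitely many functions `h(θⱼ, ·)` and `wⱼ`, together with Markov's inequality,
makes the supremum small in probability. Continuity of `θ ↦ E h(θ, Y)` is dominated convergence.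
-/

open MeasureTheory Filter Topology

theorem abs_birkhoffAverage_sub_birkhoffAverage_le {α : Type*} (T : α → α) {f f₀ w : α → ℝ}
    (hw : ∀ x, |f x - f₀ x| ≤ w x) (n : ℕ) (x : α) :
    |birkhoffAverage ℝ T f n x - birkhoffAverage ℝ T f₀ n x| ≤ birkhoffAverage ℝ T w n x := by
  simp only [birkhoffAverage, birkhoffSum, smul_eq_mul, ← mul_sub, ← Finset.sum_sub_distrib,
    abs_mul, abs_inv, Nat.abs_cast]
  gcongr
  exact (Finset.abs_sum_le_sum_abs _ _).trans (Finset.sum_le_sum fun k _ => hw _)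

theorem ContinuousOn.le_ciSup_of_mem_closure {E : Type*} [TopologicalSpace E] {φ : E → ℝ}
    {s D : Set E} (hφ : ContinuousOn φ s) (hDs : D ⊆ s) {x : E} (hxs : x ∈ s)
    (hxD : x ∈ closure D) (hbdd : BddAbove (Set.range fun y : D => φ y)) :
    φ x ≤ ⨆ y : D, φ y :=
  ContinuousWithinAt.closure_le hxD ((hφ x hxs).mono hDs) continuousWithinAt_const
    fun y hy => le_ciSup hbdd ⟨y, hy⟩

namespace MeasureTheory

variable {Ω : Type*} [MeasurableSpace Ω] {μ : Measure Ω} {T : Ω → Ω} {g : Ω → ℝ}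

theorem MemLp.birkhoffSum {p : ENNReal} (hT : MeasurePreserving T μ μ) (hg : MemLp g p μ)
    (n : ℕ) : MemLp (birkhoffSum T g n) p μ := by
  induction n with
  | zero => exact MemLp.zero
  | succ n ih =>
    rw [funext (birkhoffSum_succ T g n)]
    exact ih.add (hg.comp_measurePreserving (hT.iterate n))

theorem MemLp.birkhoffAverage {p : ENNReal} (hT : MeasurePreserving T μ μ) (hg : MemLp g p μ)
    (n : ℕ) : MemLp (birkhoffAverage ℝ T g n) p μ :=
  (hg.birkhoffSum hT n).const_smul (n : ℝ)⁻¹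

theorem Integrable.birkhoffAverage (hT : MeasurePreserving T μ μ) (hg : Integrable g μ) (n : ℕ) :
    Integrable (birkhoffAverage ℝ T g n) μ :=
  memLp_one_iff_integrable.mp ((memLp_one_iff_integrable.mpr hg).birkhoffAverage hT n)

theorem MemLp.integral_toLp {p : ENNReal} (hg : MemLp g p μ) :
    ∫ ω, hg.toLp g ω ∂μ = ∫ ω, g ω ∂μ :=
  integral_congr_ae hg.coeFn_toLp

theorem Lp.birkhoffSum_compMeasurePreserving_toLp {p : ENNReal} (hT : MeasurePreserving T μ μ)
    (hg : MemLp g p μ) (n : ℕ) :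
    birkhoffSum (Lp.compMeasurePreserving T hT) id n (hg.toLp g) =
      (hg.birkhoffSum hT n).toLp _ := by
  induction n with
  | zero => rfl
  | succ n ih =>
    rw [birkhoffSum_succ, ih, id, Lp.compMeasurePreserving_iterate, Lp.toLp_compMeasurePreserving,
      ← MemLp.toLp_add]
    congr 1
    exact (funext (birkhoffSum_succ T g n)).symm

theorem Lp.birkhoffAverage_compMeasurePreserving_toLp {p : ENNReal} [Fact (1 ≤ p)]
    (hT : MeasurePreserving T μ μ) (hg : MemLp g p μ) (n : ℕ) :
    birkhoffAverage ℝ (Lp.compMeasurePreserving T hT) id n (hg.toLp g) =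
      (hg.birkhoffAverage hT n).toLp _ := by
  rw [birkhoffAverage, birkhoffSum_compMeasurePreserving_toLp, ← MemLp.toLp_const_smul]
  rfl

theorem Lp.norm_birkhoffAverage_toLp_sub_const {p : ENNReal} [Fact (1 ≤ p)] [IsFiniteMeasure μ]
    (hT : MeasurePreserving T μ μ) (hg : MemLp g p μ) (n : ℕ) (c : ℝ) :
    ‖birkhoffAverage ℝ (Lp.compMeasurePreserving T hT) id n (hg.toLp g) - Lp.const p μ c‖ =
      (eLpNorm (birkhoffAverage ℝ T g n - fun _ => c) p μ).toReal := by
  rw [birkhoffAverage_compMeasurePreserving_toLp, ← MemLp.toLp_const, ← MemLp.toLp_sub,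
    Lp.norm_toLp]

theorem Lp.integral_const {p : ENNReal} [IsProbabilityMeasure μ] (c : ℝ) :
    ∫ ω, Lp.const p μ c ω ∂μ = c := by
  rw [integral_congr_ae (Lp.coeFn_const p μ c)]
  simp

theorem L2.inner_const_one_left [IsFiniteMeasure μ] (f : Lp ℝ 2 μ) :
    inner ℝ (Lp.const 2 μ (1 : ℝ)) f = ∫ ω, f ω ∂μ := by
  rw [← indicatorConstLp_univ, L2.inner_indicatorConstLp_one, Measure.restrict_univ]

theorem tendstoInMeasure_zero_of_forall_le_add [IsFiniteMeasure μ] {ι : Type*} {l : Filter ι}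
    {X : ι → Ω → ℝ}
    (hX : ∀ ε > 0, ∃ Z : ι → Ω → ℝ, (∀ i, 0 ≤ Z i) ∧ (∀ i, Integrable (Z i) μ) ∧
      Tendsto (fun i => ∫ ω, Z i ω ∂μ) l (𝓝 0) ∧ ∀ i ω, |X i ω| ≤ Z i ω + ε) :
    TendstoInMeasure μ X l 0 := by
  rw [tendstoInMeasure_iff_measureReal_dist]
  intro δ hδ
  obtain ⟨Z, hZ0, hZi, hZ, hXZ⟩ := hX (δ / 2) (half_pos hδ)
  have hmarkov : ∀ i, μ.real {ω | δ ≤ dist (X i ω) ((0 : Ω → ℝ) ω)} ≤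
      (∫ ω, Z i ω ∂μ) / (δ / 2) := by
    intro i
    rw [le_div_iff₀' (half_pos hδ)]
    refine le_trans (mul_le_mul_of_nonneg_left (measureReal_mono fun ω hω => ?_) (half_pos hδ).le)
      (mul_meas_ge_le_integral_of_nonneg (ae_of_all μ (hZ0 i)) (hZi i) (δ / 2))
    simp only [Set.mem_ofPred_eq, Pi.zero_apply, Real.dist_eq, sub_zero] at hω ⊢
    linarith [hXZ i ω]
  refine squeeze_zero (fun _ => measureReal_nonneg) hmarkov ?_
  simpa using hZ.div_const (δ / 2)

theorem abs_birkhoffAverage_sub_integral_le {f f₀ w : Ω → ℝ} (hf : Integrable f μ)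
    (hf₀ : Integrable f₀ μ) (hw : Integrable w μ) (hbr : ∀ ω, |f ω - f₀ ω| ≤ w ω) (n : ℕ)
    (ω : Ω) :
    |birkhoffAverage ℝ T f n ω - ∫ x, f x ∂μ| ≤
      |birkhoffAverage ℝ T f₀ n ω - ∫ x, f₀ x ∂μ| + |birkhoffAverage ℝ T w n ω - ∫ x, w x ∂μ| +
        2 * ∫ x, w x ∂μ := by
  have hA := abs_birkhoffAverage_sub_birkhoffAverage_le T hbr n ω
  have hI : |∫ x, f x ∂μ - ∫ x, f₀ x ∂μ| ≤ ∫ x, w x ∂μ := by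
    rw [← integral_sub hf hf₀]
    exact norm_integral_le_of_norm_le hw
      (ae_of_all μ fun x => (Real.norm_eq_abs _).trans_le (hbr x))
  calc |birkhoffAverage ℝ T f n ω - ∫ x, f x ∂μ|
      = |(birkhoffAverage ℝ T f₀ n ω - ∫ x, f₀ x ∂μ) +
          (birkhoffAverage ℝ T f n ω - birkhoffAverage ℝ T f₀ n ω) -
          (∫ x, f x ∂μ - ∫ x, f₀ x ∂μ)| := by ring_nf
    _ ≤ |birkhoffAverage ℝ T f₀ n ω - ∫ x, f₀ x ∂μ| +
          |birkhoffAverage ℝ T f n ω - birkhoffAverage ℝ T f₀ n ω| +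
          |∫ x, f x ∂μ - ∫ x, f₀ x ∂μ| := (abs_sub _ _).trans (by gcongr; exact abs_add_le _ _)
    _ ≤ _ := by linarith [le_abs_self (birkhoffAverage ℝ T w n ω - ∫ x, w x ∂μ)]

variable {E : Type*} [PseudoMetricSpace E] {Θ : Set E} {F : E → Ω → ℝ} {S : Ω → ℝ}

theorem exists_integrable_local_bracket (hΘ : IsCompact Θ) (hF : ∀ θ, Measurable (F θ))
    (hcont : ∀ ω, ContinuousOn (F · ω) Θ) (hS : Integrable S μ)
    (hFS : ∀ θ ∈ Θ, ∀ ω, |F θ ω| ≤ S ω) {θ₀ : E} (hθ₀ : θ₀ ∈ Θ) {ε : ℝ} (hε : 0 < ε) :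
    ∃ r > 0, ∃ w : Ω → ℝ, Integrable w μ ∧ ∫ ω, w ω ∂μ ≤ ε ∧
      ∀ θ ∈ Θ ∩ Metric.ball θ₀ r, ∀ ω, |F θ ω - F θ₀ ω| ≤ w ω := by
  obtain ⟨D, hDΘ, hDc, hΘD⟩ := hΘ.isSeparable.exists_countable_dense_subset
  -- the supremum runs over the countable dense `D` to keep `w r` measurable
  set w : ℝ → Ω → ℝ := fun r ω => ⨆ θ : ↥(Metric.ball θ₀ r ∩ D), |F θ ω - F θ₀ ω|
  have hS0 : ∀ ω, 0 ≤ S ω := fun ω => (abs_nonneg _).trans (hFS θ₀ hθ₀ ω)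
  have hdev_le : ∀ θ ∈ Θ, ∀ ω, |F θ ω - F θ₀ ω| ≤ 2 * S ω := fun θ hθ ω => by
    linarith [abs_sub (F θ ω) (F θ₀ ω), hFS θ hθ ω, hFS θ₀ hθ₀ ω]
  have hw0 : ∀ r ω, 0 ≤ w r ω := fun r ω => Real.iSup_nonneg fun _ => abs_nonneg _
  have hw_le : ∀ r ω, ‖w r ω‖ ≤ 2 * S ω := fun r ω => by
    rw [Real.norm_eq_abs, abs_of_nonneg (hw0 r ω)]
    exact Real.iSup_le (fun θ => hdev_le θ (hDΘ θ.2.2) ω) (by linarith [hS0 ω])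
  have hw_int : ∀ r, Integrable (w r) μ := fun r =>
    have : Countable ↥(Metric.ball θ₀ r ∩ D) := (hDc.mono Set.inter_subset_right).to_subtype
    (hS.const_mul 2).mono'
      (Measurable.iSup fun θ : ↥(Metric.ball θ₀ r ∩ D) =>
        ((hF θ).sub (hF θ₀)).abs).aestronglyMeasurable
      (ae_of_all μ (hw_le r))
  have hw_tendsto : ∀ ω, Tendsto (fun r => w r ω) (𝓝[>] 0) (𝓝 0) := by
    intro ω
    rw [Metric.tendsto_nhds]
    intro η hη
    obtain ⟨δ, hδ, hδη⟩ :=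
      Metric.continuousWithinAt_iff.mp (hcont ω θ₀ hθ₀) (η / 2) (half_pos hη)
    filter_upwards [Ioo_mem_nhdsGT hδ] with r hr
    have : w r ω ≤ η / 2 := Real.iSup_le (fun θ =>
      (Real.dist_eq _ _ ▸ hδη (hDΘ θ.2.2) ((Metric.mem_ball.mp θ.2.1).trans hr.2)).le)
      (by positivity)
    rw [Real.dist_eq, sub_zero, abs_of_nonneg (hw0 r ω)]
    linarith
  have hw_integral : Tendsto (fun r => ∫ ω, w r ω ∂μ) (𝓝[>] 0) (𝓝 0) := by
    simpa using tendsto_integral_filter_of_dominated_convergence (fun ω => 2 * S ω)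
      (Eventually.of_forall fun r => (hw_int r).aestronglyMeasurable)
      (Eventually.of_forall fun r => ae_of_all μ (hw_le r)) (hS.const_mul 2)
      (ae_of_all μ hw_tendsto)
  obtain ⟨r, hr, hwr⟩ :=
    (eventually_mem_nhdsWithin.and (hw_integral.eventually (gt_mem_nhds hε))).exists
  refine ⟨r, hr, w r, hw_int r, hwr.le, fun θ hθ ω => ?_⟩
  exact ((hcont ω).sub continuousOn_const).abs.le_ciSup_of_mem_closure
    (Set.inter_subset_right.trans hDΘ) hθ.1
    (Metric.isOpen_ball.inter_closure ⟨hθ.2, hΘD hθ.1⟩)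
    ⟨2 * S ω, Set.forall_mem_range.mpr fun θ => hdev_le θ (hDΘ θ.2.2) ω⟩

end MeasureTheory

namespace Ergodic

variable {Ω : Type*} [MeasurableSpace Ω] {μ : Measure Ω} [IsProbabilityMeasure μ] {T : Ω → Ω}
  {g : Ω → ℝ}

theorem tendsto_birkhoffAverage_L2 (hT : Ergodic T μ) (G : Lp ℝ 2 μ) :
    Tendsto (birkhoffAverage ℝ (Lp.compMeasurePreserving T hT.toMeasurePreserving) id · G) atTop
      (𝓝 (Lp.const 2 μ (∫ ω, G ω ∂μ))) := by
  set U := (Lp.compMeasurePreservingₗᵢ ℝ T hT.toMeasurePreserving :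
    Lp ℝ 2 μ →ₗᵢ[ℝ] Lp ℝ 2 μ).toContinuousLinearMap
  -- the invariant vectors are constants by ergodicity, and pairing with the invariant vector `1`
  -- shows that the constant is the mean
  have hP := U.tendsto_birkhoffAverage_orthogonalProjection
    (LinearIsometry.norm_toContinuousLinearMap_le _) G
  set K := U.eqLocus (1 : Lp ℝ 2 μ →L[ℝ] Lp ℝ 2 μ)
  set P := K.orthogonalProjectionOnto G
  obtain ⟨c, hc⟩ : ∃ c : ℝ, (P : Lp ℝ 2 μ) = Lp.const 2 μ c := by
    have : U P = P := P.2
    obtain ⟨c, hc⟩ := hT.eq_const_of_compMeasurePreserving_eq (congrArg Subtype.val this)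
    exact ⟨c, Subtype.ext hc⟩
  have hcG : c = ∫ ω, G ω ∂μ := by
    have h1 : Lp.const 2 μ (1 : ℝ) ∈ K := rfl
    have := K.inner_orthogonalProjectionOnto_eq_of_mem_left ⟨_, h1⟩ G
    rwa [Submodule.coe_inner, hc, L2.inner_const_one_left, L2.inner_const_one_left,
      Lp.integral_const] at this
  rwa [← hcG, ← hc]

theorem tendsto_birkhoffAverage_L1_of_memLp_two (hT : Ergodic T μ) (hg : MemLp g 2 μ) :
    Tendsto (birkhoffAverage ℝ (Lp.compMeasurePreserving T hT.toMeasurePreserving) id ·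
      ((hg.mono_exponent one_le_two).toLp g)) atTop
      (𝓝 (Lp.const 1 μ (∫ ω, (hg.mono_exponent one_le_two).toLp g ω ∂μ))) := by
  have h2 := hT.tendsto_birkhoffAverage_L2 (hg.toLp g)
  rw [tendsto_iff_norm_sub_tendsto_zero] at h2 ⊢
  refine squeeze_zero (fun _ => norm_nonneg _) (fun n => ?_) h2
  rw [MemLp.integral_toLp, MemLp.integral_toLp, Lp.norm_birkhoffAverage_toLp_sub_const,
    Lp.norm_birkhoffAverage_toLp_sub_const]
  have hA := (hg.birkhoffAverage hT.toMeasurePreserving n).sub (memLp_const (∫ ω, g ω ∂μ))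
  exact ENNReal.toReal_mono hA.eLpNorm_ne_top
    (eLpNorm_le_eLpNorm_of_exponent_le one_le_two hA.aestronglyMeasurable)

theorem tendsto_birkhoffAverage_L1 (hT : Ergodic T μ) (G : Lp ℝ 1 μ) :
    Tendsto (birkhoffAverage ℝ (Lp.compMeasurePreserving T hT.toMeasurePreserving) id · G) atTop
      (𝓝 (Lp.const 1 μ (∫ ω, G ω ∂μ))) := by
  refine (Lp.simpleFunc.denseRange ENNReal.one_ne_top).induction_on G ?_ fun f => ?_
  · exact isClosed_setOfPred_tendsto_birkhoffAverage ℝ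
      (Lp.isometry_compMeasurePreserving _).lipschitz uniformContinuous_id
      ((Lp.constL 1 μ ℝ).continuous.comp continuous_integral)
  · rw [← Lp.simpleFunc.toLp_toSimpleFunc f]
    exact hT.tendsto_birkhoffAverage_L1_of_memLp_two
      ((Lp.simpleFunc.toSimpleFunc f).memLp_of_isFiniteMeasure 2 μ)

theorem tendsto_integral_abs_birkhoffAverage_sub (hT : Ergodic T μ) (hg : Integrable g μ) :
    Tendsto (fun n => ∫ ω, |birkhoffAverage ℝ T g n ω - ∫ ω, g ω ∂μ| ∂μ) atTop (𝓝 0) := by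
  have hg1 : MemLp g 1 μ := memLp_one_iff_integrable.mpr hg
  have h := hT.tendsto_birkhoffAverage_L1 (hg1.toLp g)
  rw [tendsto_iff_norm_sub_tendsto_zero] at h
  refine h.congr fun n => ?_
  have hA := (hg1.birkhoffAverage hT.toMeasurePreserving n).sub (memLp_const (∫ ω, g ω ∂μ))
  rw [MemLp.integral_toLp, Lp.norm_birkhoffAverage_toLp_sub_const, eLpNorm_one_eq_lintegral_enorm,
    ← integral_norm_eq_lintegral_enorm hA.aestronglyMeasurable]
  rfl

theorem tendstoInMeasure_sSup_abs_birkhoffAverage_sub (hT : Ergodic T μ) {E : Type*}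
    [PseudoMetricSpace E] {Θ : Set E} (hΘ : IsCompact Θ) {F : E → Ω → ℝ}
    (hF : ∀ θ, Measurable (F θ)) (hcont : ∀ ω, ContinuousOn (F · ω) Θ) {S : Ω → ℝ}
    (hS : Integrable S μ) (hFS : ∀ θ ∈ Θ, ∀ ω, |F θ ω| ≤ S ω) :
    TendstoInMeasure μ (fun n ω => sSup ((fun θ =>
      |birkhoffAverage ℝ T (F θ) n ω - ∫ x, F θ x ∂μ|) '' Θ)) atTop 0 := by
  have hFi : ∀ θ ∈ Θ, Integrable (F θ) μ := fun θ hθ =>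
    hS.mono' (hF θ).aestronglyMeasurable (ae_of_all μ (hFS θ hθ))
  refine tendstoInMeasure_zero_of_forall_le_add fun ε hε => ?_
  choose r hr w hw_int hw_small hw_bracket using fun θ₀ (hθ₀ : θ₀ ∈ Θ) =>
    exists_integrable_local_bracket hΘ hF hcont hS hFS hθ₀ (half_pos hε)
  obtain ⟨t, hcover⟩ := hΘ.elim_nhds_subcover' (fun θ₀ hθ₀ => Metric.ball θ₀ (r θ₀ hθ₀))
    fun θ₀ hθ₀ => Metric.ball_mem_nhds θ₀ (hr θ₀ hθ₀)
  set dev : (Ω → ℝ) → ℕ → Ω → ℝ := fun f n ω => |birkhoffAverage ℝ T f n ω - ∫ x, f x ∂μ|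
  have hdev_int : ∀ f, Integrable f μ → ∀ n, Integrable (dev f n) μ := fun f hf n =>
    ((hf.birkhoffAverage hT.toMeasurePreserving n).sub (integrable_const _)).abs
  have hdev_tendsto : ∀ f, Integrable f μ → Tendsto (fun n => ∫ ω, dev f n ω ∂μ) atTop (𝓝 0) :=
    fun f hf => hT.tendsto_integral_abs_birkhoffAverage_sub hf
  refine ⟨fun n ω => ∑ x ∈ t, (dev (F x) n ω + dev (w x x.2) n ω),
    fun n ω => Finset.sum_nonneg fun x _ => by positivity, fun n => ?_, ?_, fun n ω => ?_⟩
  · exact integrable_finsetSum _ fun x _ =>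
      (hdev_int _ (hFi x x.2) n).add (hdev_int _ (hw_int x x.2) n)
  · have := tendsto_finsetSum t fun x _ =>
      (hdev_tendsto _ (hFi x x.2)).add (hdev_tendsto _ (hw_int x x.2))
    simp only [add_zero, Finset.sum_const_zero] at this
    refine this.congr fun n => ?_
    beta_reduce
    rw [integral_finsetSum t (f := fun (x : Θ) ω => dev (F x) n ω + dev (w x x.2) n ω)
      fun x _ => (hdev_int _ (hFi x x.2) n).add (hdev_int _ (hw_int x x.2) n)]
    exact Finset.sum_congr rfl fun (x : Θ) _ =>
      (integral_add (hdev_int _ (hFi x x.2) n) (hdev_int _ (hw_int x x.2) n)).symm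
  · rw [abs_of_nonneg (Real.sSup_nonneg (by rintro _ ⟨θ, -, rfl⟩; exact abs_nonneg _))]
    refine Real.sSup_le ?_ (by positivity)
    rintro _ ⟨θ, hθ, rfl⟩
    obtain ⟨x, hxt, hθx⟩ : ∃ x ∈ t, θ ∈ Metric.ball (x : E) (r x x.2) := by
      simpa using hcover hθ
    have hθ_dev := abs_birkhoffAverage_sub_integral_le (T := T) (hFi θ hθ) (hFi x x.2)
      (hw_int x x.2) (hw_bracket x x.2 θ ⟨hθ, hθx⟩) n ω
    have hx_le_sum := Finset.single_le_sum (f := fun x : Θ => dev (F x) n ω + dev (w x x.2) n ω)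
      (fun y _ => by positivity) hxt
    linarith [hw_small x x.2]

end Ergodic

theorem uniform_law_of_large_numbers_general {Ω : Type*} [MeasurableSpace Ω]
    (μ : Measure Ω) [IsProbabilityMeasure μ]
    (T : Ω → Ω) (hT : Ergodic T μ)
    (Y : Ω → ℝ) (hY : Measurable Y)
    {p : ℕ} (Θ : Set (EuclideanSpace ℝ (Fin p))) (hΘ : IsCompact Θ)
    (h : EuclideanSpace ℝ (Fin p) → ℝ → ℝ)
    (hcont : ∀ y, ContinuousOn (fun θ => h θ y) Θ)
    (hmeas : ∀ θ, Measurable (h θ))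
    (s : ℝ → ℝ)
    (hdom : ∀ θ ∈ Θ, ∀ y, |h θ y| ≤ s y)
    (hs_int : Integrable (fun ω => s (Y ω)) μ) :
    TendstoInMeasure μ
      (fun (n : ℕ) (ω : Ω) => sSup ((fun θ =>
        |(1 / (n : ℝ)) * ∑ i ∈ Finset.range n, h θ (Y (T^[i] ω)) -
          ∫ ω', h θ (Y ω') ∂μ|) '' Θ))
      atTop (fun _ => 0) ∧
    ContinuousOn (fun θ => ∫ ω, h θ (Y ω) ∂μ) Θ := by
  have hdomY : ∀ θ ∈ Θ, ∀ ω, |h θ (Y ω)| ≤ s (Y ω) := fun θ hθ ω => hdom θ hθ (Y ω)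
  refine ⟨?_, fun θ₀ hθ₀ => continuousWithinAt_of_dominated
    (Eventually.of_forall fun θ => ((hmeas θ).comp hY).aestronglyMeasurable)
    (eventually_mem_nhdsWithin.mono fun θ hθ => ae_of_all μ (hdomY θ hθ)) hs_int
    (ae_of_all μ fun ω => hcont (Y ω) θ₀ hθ₀)⟩
  have hULLN := hT.tendstoInMeasure_sSup_abs_birkhoffAverage_sub (F := fun θ ω => h θ (Y ω)) hΘ
    (fun θ => (hmeas θ).comp hY) (fun ω => hcont (Y ω)) hs_int hdomY
  simp only [birkhoffAverage, birkhoffSum, smul_eq_mul, ← one_div] at hULLN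
  exact hULLN

/-- Uniform Law of Large Numbers for stationary ergodic sequences: the process is
`Y_i = Y ∘ T^{i}` with `T` ergodic measure-preserving. Under continuity in `θ`,
measurability in `y` and integrable domination, the supremum over a compact `Θ` of
the deviation of empirical means from the expectation tends to `0` in probability,
and `θ ↦ E[h(θ,Y₁)]` is continuous on `Θ`. -/
theorem uniform_law_of_large_numbers {Ω : Type*} [MeasurableSpace Ω]
    (μ : Measure Ω) [IsProbabilityMeasure μ]
    (T : Ω → Ω) (hT : Ergodic T μ)
    (Y : Ω → ℝ) (hY : Measurable Y)
    {p : ℕ} (Θ : Set (EuclideanSpace ℝ (Fin p))) (hΘ : IsCompact Θ) (hne : Θ.Nonempty)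
    (h : EuclideanSpace ℝ (Fin p) → ℝ → ℝ)
    (hcont : ∀ y, ContinuousOn (fun θ => h θ y) Θ)
    (hmeas : ∀ θ, Measurable (h θ))
    (s : ℝ → ℝ) (hs_meas : Measurable s)
    (hdom : ∀ θ ∈ Θ, ∀ y, |h θ y| ≤ s y)
    (hs_int : Integrable (fun ω => s (Y ω)) μ) :
    TendstoInMeasure μ
      (fun (n : ℕ) (ω : Ω) => sSup ((fun θ =>
        |(1 / (n : ℝ)) * ∑ i ∈ Finset.range n, h θ (Y (T^[i] ω)) -
          ∫ ω', h θ (Y ω') ∂μ|) '' Θ))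
      atTop (fun _ => 0) ∧
    ContinuousOn (fun θ => ∫ ω, h θ (Y ω) ∂μ) Θ :=
  uniform_law_of_large_numbers_general μ T hT Y hY Θ hΘ h hcont hmeas s hdom hs_int
end
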